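/- Let (U₀, U) be (d+1)-dimensional centered Gaussian with covariance the full-rank correlation matrix Ω* with blocks 1, δᵀ; δ, Ω̄. Then the conditional distribution of U given U₀ > 0 has density 2 φ_d(u; Ω̄) Φ(αᵀ u) where α = Ω̄^{-1} δ / √(1 - δᵀ Ω̄^{-1} δ). -/

import Mathlib

open MeasureTheory ProbabilityTheory Matrix Real

/-- The standard normal cumulative distribution function. -/
noncomputable def stdNormalCDF (x : ℝ) : ℝ := (gaussianReal 0 1 (Set.Iic x)).toReal

/-- The centered multivariate normal density with covariance matrix `S`. -/
noncomputable def mvNormalPDF {n : Type*} [Fintype n] [DecidableEq n]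
    (S : Matrix n n ℝ) (z : n → ℝ) : ℝ :=
  (2 * π) ^ (-(Fintype.card n : ℝ) / 2) * S.det ^ (-(1 : ℝ) / 2) *
    Real.exp (-(z ⬝ᵥ S⁻¹.mulVec z) / 2)

/-- Concatenation of a scalar and a d-vector into a (1+d)-vector. -/
def vcat {d : ℕ} (x : ℝ) (u : Fin d → ℝ) : (Fin 1 ⊕ Fin d) → ℝ := Sum.elim (fun _ => x) u

/-- The (d+1)×(d+1) correlation matrix Ω* with blocks 1, δᵀ; δ, Ω̄. -/
def corrBlock {d : ℕ} (δ : Fin d → ℝ) (Ωb : Matrix (Fin d) (Fin d) ℝ) :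
    Matrix (Fin 1 ⊕ Fin d) (Fin 1 ⊕ Fin d) ℝ :=
  Matrix.fromBlocks 1 (Matrix.replicateRow (Fin 1) δ) (Matrix.replicateCol (Fin 1) δ) Ωb

namespace Stmt11

open NNReal ENNReal

variable {d : ℕ}

lemma row_mul_col_eq_smul_one (w₁ w₂ : Fin d → ℝ) :
    replicateRow (Fin 1) w₁ * replicateCol (Fin 1) w₂ = (w₁ ⬝ᵥ w₂) • (1 : Matrix (Fin 1) (Fin 1) ℝ) := by
  ext i j
  fin_cases i; fin_cases j
  simp [Matrix.one_apply]

lemma col_mulVec_const (w : Fin d → ℝ) (x : ℝ) :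
    replicateCol (Fin 1) w *ᵥ (Function.const (Fin 1) x) = x • w := by
  ext i
  simp [Matrix.mulVec, dotProduct, Matrix.replicateCol, mul_comm]

/-- candidate inverse of the block correlation matrix -/
noncomputable def Minv (Ωb : Matrix (Fin d) (Fin d) ℝ) (δ : Fin d → ℝ) :
    Matrix (Fin 1 ⊕ Fin d) (Fin 1 ⊕ Fin d) ℝ :=
  fromBlocks ((1 - δ ⬝ᵥ Ωb⁻¹ *ᵥ δ)⁻¹ • 1)
    ((-(1 - δ ⬝ᵥ Ωb⁻¹ *ᵥ δ)⁻¹) • replicateRow (Fin 1) (Ωb⁻¹ *ᵥ δ))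
    ((-(1 - δ ⬝ᵥ Ωb⁻¹ *ᵥ δ)⁻¹) • replicateCol (Fin 1) (Ωb⁻¹ *ᵥ δ))
    (Ωb⁻¹ + (1 - δ ⬝ᵥ Ωb⁻¹ *ᵥ δ)⁻¹ • (replicateCol (Fin 1) (Ωb⁻¹ *ᵥ δ) * replicateRow (Fin 1) (Ωb⁻¹ *ᵥ δ)))

variable {Ωb : Matrix (Fin d) (Fin d) ℝ} {δ : Fin d → ℝ}

lemma corr_mul_Minv (hΩ : Ωb.PosDef) (hδ : δ ⬝ᵥ Ωb⁻¹ *ᵥ δ < 1) :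
    corrBlock δ Ωb * Minv Ωb δ = 1 := by
  have hdet : IsUnit Ωb.det := hΩ.det_pos.ne'.isUnit
  have hinv : Ωb * Ωb⁻¹ = 1 := Matrix.mul_nonsing_inv _ hdet
  have hT : Ωbᵀ = Ωb := by
    rw [← Matrix.conjTranspose_eq_transpose_of_trivial]; exact hΩ.isHermitian
  have hvm : δ ᵥ* Ωb⁻¹ = Ωb⁻¹ *ᵥ δ := by
    rw [← Matrix.vecMul_transpose, Matrix.transpose_nonsing_inv, hT]
  have hOv : Ωb *ᵥ (Ωb⁻¹ *ᵥ δ) = δ := by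
    rw [Matrix.mulVec_mulVec, hinv, Matrix.one_mulVec]
  have hOcol : Ωb * replicateCol (Fin 1) (Ωb⁻¹ *ᵥ δ) = replicateCol (Fin 1) δ := by
    rw [← Matrix.replicateCol_mulVec, hOv]
  have hrow : replicateRow (Fin 1) δ * Ωb⁻¹ = replicateRow (Fin 1) (Ωb⁻¹ *ᵥ δ) := by
    rw [← hvm, Matrix.replicateRow_vecMul]
  have hs2 : (1 : ℝ) - δ ⬝ᵥ Ωb⁻¹ *ᵥ δ ≠ 0 := sub_ne_zero.mpr hδ.ne'
  have hc1 : (1 - δ ⬝ᵥ Ωb⁻¹ *ᵥ δ)⁻¹ * (1 - δ ⬝ᵥ Ωb⁻¹ *ᵥ δ) = 1 := inv_mul_cancel₀ hs2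
  have hTL : (1 : Matrix (Fin 1) (Fin 1) ℝ) * ((1 - δ ⬝ᵥ Ωb⁻¹ *ᵥ δ)⁻¹ • (1 : Matrix (Fin 1) (Fin 1) ℝ))
      + replicateRow (Fin 1) δ * ((-(1 - δ ⬝ᵥ Ωb⁻¹ *ᵥ δ)⁻¹) • replicateCol (Fin 1) (Ωb⁻¹ *ᵥ δ)) = 1 := by
    rw [Matrix.one_mul, Matrix.mul_smul, row_mul_col_eq_smul_one, smul_smul]
    ext i j
    fin_cases i; fin_cases j
    simp only [Matrix.add_apply, Matrix.smul_apply, Matrix.one_apply_eq, smul_eq_mul, mul_one]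
    linear_combination hc1
  have hTR : (1 : Matrix (Fin 1) (Fin 1) ℝ) * ((-(1 - δ ⬝ᵥ Ωb⁻¹ *ᵥ δ)⁻¹) • replicateRow (Fin 1) (Ωb⁻¹ *ᵥ δ))
      + replicateRow (Fin 1) δ * (Ωb⁻¹ + (1 - δ ⬝ᵥ Ωb⁻¹ *ᵥ δ)⁻¹ • (replicateCol (Fin 1) (Ωb⁻¹ *ᵥ δ) * replicateRow (Fin 1) (Ωb⁻¹ *ᵥ δ))) = 0 := by
    simp only [Matrix.one_mul, Matrix.mul_add, Matrix.mul_smul, hrow]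
    rw [← Matrix.mul_assoc, row_mul_col_eq_smul_one, Matrix.smul_mul, Matrix.one_mul, smul_smul]
    match_scalars
    first
    | linear_combination hc1
    | linear_combination -hc1
    | linear_combination (2:ℝ) * hc1
    | linear_combination (-2:ℝ) * hc1
  have hBL : replicateCol (Fin 1) δ * ((1 - δ ⬝ᵥ Ωb⁻¹ *ᵥ δ)⁻¹ • (1 : Matrix (Fin 1) (Fin 1) ℝ))
      + Ωb * ((-(1 - δ ⬝ᵥ Ωb⁻¹ *ᵥ δ)⁻¹) • replicateCol (Fin 1) (Ωb⁻¹ *ᵥ δ)) = 0 := by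
    simp only [Matrix.mul_smul, Matrix.mul_one, hOcol]
    module
  have hBR : replicateCol (Fin 1) δ * ((-(1 - δ ⬝ᵥ Ωb⁻¹ *ᵥ δ)⁻¹) • replicateRow (Fin 1) (Ωb⁻¹ *ᵥ δ))
      + Ωb * (Ωb⁻¹ + (1 - δ ⬝ᵥ Ωb⁻¹ *ᵥ δ)⁻¹ • (replicateCol (Fin 1) (Ωb⁻¹ *ᵥ δ) * replicateRow (Fin 1) (Ωb⁻¹ *ᵥ δ))) = 1 := by
    simp only [Matrix.mul_smul, Matrix.mul_add, hinv]
    rw [← Matrix.mul_assoc, hOcol]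
    module
  unfold corrBlock Minv
  rw [fromBlocks_multiply, hTL, hTR, hBL, hBR, fromBlocks_one]

lemma corr_inv (hΩ : Ωb.PosDef) (hδ : δ ⬝ᵥ Ωb⁻¹ *ᵥ δ < 1) :
    (corrBlock δ Ωb)⁻¹ = Minv Ωb δ :=
  Matrix.inv_eq_right_inv (corr_mul_Minv hΩ hδ)

lemma corr_det (hΩ : Ωb.PosDef) :
    (corrBlock δ Ωb).det = Ωb.det * (1 - δ ⬝ᵥ Ωb⁻¹ *ᵥ δ) := by
  have hdet : IsUnit Ωb.det := hΩ.det_pos.ne'.isUnit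
  have : Invertible Ωb := Ωb.invertibleOfIsUnitDet hdet
  rw [corrBlock, Matrix.det_fromBlocks₂₂]
  congr 1
  rw [Matrix.invOf_eq_nonsing_inv, det_unique, Matrix.mul_assoc, ← Matrix.replicateCol_mulVec]
  simp [Matrix.one_apply]


lemma fin1_dotProduct (f g : Fin 1 → ℝ) : f ⬝ᵥ g = f 0 * g 0 := by
  simp [dotProduct]

lemma quad_form (hΩ : Ωb.PosDef) (hδ : δ ⬝ᵥ Ωb⁻¹ *ᵥ δ < 1) (x : ℝ) (u : Fin d → ℝ) :
    vcat x u ⬝ᵥ (corrBlock δ Ωb)⁻¹ *ᵥ vcat x u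
      = u ⬝ᵥ Ωb⁻¹ *ᵥ u + (x - (Ωb⁻¹ *ᵥ δ) ⬝ᵥ u) ^ 2 / (1 - δ ⬝ᵥ Ωb⁻¹ *ᵥ δ) := by
  have hs2 : (1 : ℝ) - δ ⬝ᵥ Ωb⁻¹ *ᵥ δ ≠ 0 := sub_ne_zero.mpr hδ.ne'
  rw [corr_inv hΩ hδ]
  have hmv : (replicateCol (Fin 1) (Ωb⁻¹ *ᵥ δ) * replicateRow (Fin 1) (Ωb⁻¹ *ᵥ δ)) *ᵥ u
      = ((Ωb⁻¹ *ᵥ δ) ⬝ᵥ u) • (Ωb⁻¹ *ᵥ δ) := by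
    rw [← Matrix.mulVec_mulVec, replicateRow_mulVec_eq_const, col_mulVec_const]
  have hx : (fun _ : Fin 1 => x) = Function.const (Fin 1) x := rfl
  show Sum.elim (fun _ => x) u ⬝ᵥ Minv Ωb δ *ᵥ Sum.elim (fun _ => x) u = _
  unfold Minv
  rw [fromBlocks_mulVec]
  simp only [Sum.elim_comp_inl, Sum.elim_comp_inr]
  rw [sumElim_dotProduct_sumElim, add_mulVec, hx,
      Matrix.smul_mulVec, Matrix.one_mulVec, Matrix.smul_mulVec, replicateRow_mulVec_eq_const,
      Matrix.smul_mulVec, col_mulVec_const, Matrix.smul_mulVec, hmv, fin1_dotProduct]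
  simp only [Pi.add_apply, Pi.smul_apply, Function.const_apply, smul_eq_mul,
    dotProduct_add, dotProduct_smul]
  rw [dotProduct_comm u (Ωb⁻¹ *ᵥ δ)]
  field_simp
  ring


lemma mvNormalPDF_nonneg {n : Type*} [Fintype n] [DecidableEq n] {S : Matrix n n ℝ}
    (hS : 0 ≤ S.det) (z : n → ℝ) : 0 ≤ mvNormalPDF S z := by
  unfold mvNormalPDF
  have hπ : (0:ℝ) ≤ 2 * π := by positivity
  positivity

lemma factor (hΩ : Ωb.PosDef) (hδ : δ ⬝ᵥ Ωb⁻¹ *ᵥ δ < 1) (x : ℝ) (u : Fin d → ℝ) :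
    mvNormalPDF (corrBlock δ Ωb) (vcat x u)
      = mvNormalPDF Ωb u
        * gaussianPDFReal ((Ωb⁻¹ *ᵥ δ) ⬝ᵥ u) (NNReal.mk (1 - δ ⬝ᵥ Ωb⁻¹ *ᵥ δ) (by linarith)) x := by
  have hs2 : (0:ℝ) < 1 - δ ⬝ᵥ Ωb⁻¹ *ᵥ δ := by linarith
  have hdet : (0:ℝ) < Ωb.det := hΩ.det_pos
  have hπ : (0:ℝ) < 2 * π := by positivity
  unfold mvNormalPDF gaussianPDFReal
  rw [corr_det hΩ, quad_form hΩ hδ]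
  have hcard : (Fintype.card (Fin 1 ⊕ Fin d) : ℝ) = 1 + d := by simp
  rw [hcard]
  simp only [NNReal.coe_mk]
  have h1 : ((2:ℝ) * π) ^ (-(1 + (d:ℝ)) / 2) = (2 * π) ^ (-(d:ℝ)/2) * (2*π) ^ (-(1:ℝ)/2) := by
    rw [← Real.rpow_add hπ]; ring_nf
  have h2 : (Ωb.det * (1 - δ ⬝ᵥ Ωb⁻¹ *ᵥ δ)) ^ (-(1:ℝ)/2)
      = Ωb.det ^ (-(1:ℝ)/2) * (1 - δ ⬝ᵥ Ωb⁻¹ *ᵥ δ) ^ (-(1:ℝ)/2) :=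
    Real.mul_rpow hdet.le hs2.le
  have h3 : (Real.sqrt (2 * π * (1 - δ ⬝ᵥ Ωb⁻¹ *ᵥ δ)))⁻¹
      = (2*π) ^ (-(1:ℝ)/2) * (1 - δ ⬝ᵥ Ωb⁻¹ *ᵥ δ) ^ (-(1:ℝ)/2) := by
    rw [Real.sqrt_eq_rpow, Real.mul_rpow hπ.le hs2.le, mul_inv,
      ← Real.rpow_neg hπ.le, ← Real.rpow_neg hs2.le]
    norm_num
  have h4 : Real.exp (-(u ⬝ᵥ Ωb⁻¹ *ᵥ u + (x - (Ωb⁻¹ *ᵥ δ) ⬝ᵥ u)^2 / (1 - δ ⬝ᵥ Ωb⁻¹ *ᵥ δ)) / 2)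
      = Real.exp (-(u ⬝ᵥ Ωb⁻¹ *ᵥ u)/2)
        * Real.exp (-(x - (Ωb⁻¹ *ᵥ δ) ⬝ᵥ u)^2 / (2 * (1 - δ ⬝ᵥ Ωb⁻¹ *ᵥ δ))) := by
    rw [← Real.exp_add]
    congr 1
    generalize u ⬝ᵥ Ωb⁻¹ *ᵥ u = a
    generalize (x - (Ωb⁻¹ *ᵥ δ) ⬝ᵥ u)^2 = b
    generalize hgen : (1 : ℝ) - δ ⬝ᵥ Ωb⁻¹ *ᵥ δ = s at hs2 ⊢
    field_simp
    ring
  rw [h1, h2, h3, h4]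
  simp only [Fintype.card_fin]
  ring


lemma gaussianReal_singleton (μ : ℝ) {v : ℝ≥0} (hv : v ≠ 0) (a : ℝ) :
    gaussianReal μ v {a} = 0 := by
  rw [gaussianReal_of_var_ne_zero _ hv, withDensity_apply _ (measurableSet_singleton a),
    setLIntegral_measure_zero _ _ (measure_singleton a)]

lemma std_Ioi (a : ℝ) : gaussianReal 0 1 (Set.Ioi a) = gaussianReal 0 1 (Set.Iic (-a)) := by
  have hmap : (gaussianReal 0 1).map (fun x => (-1 : ℝ) * x) = gaussianReal 0 1 := by
    have h1 : (NNReal.mk ((-1:ℝ)^2) (sq_nonneg _)) * 1 = 1 := by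
      ext; norm_num
    rw [gaussianReal_map_const_mul, h1, mul_zero]
  have h0 : gaussianReal 0 1 {(-a)} = 0 := gaussianReal_singleton 0 one_ne_zero (-a)
  calc gaussianReal 0 1 (Set.Ioi a)
      = (gaussianReal 0 1).map (fun x => (-1:ℝ)*x) (Set.Ioi a) := by rw [hmap]
    _ = gaussianReal 0 1 ((fun x => (-1:ℝ)*x) ⁻¹' Set.Ioi a) :=
        Measure.map_apply (measurable_const_mul _) measurableSet_Ioi
    _ = gaussianReal 0 1 (Set.Iio (-a)) := by
        rw [Set.preimage_const_mul_Ioi_of_neg _ (by norm_num : (-1:ℝ) < 0),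
          show a / (-1:ℝ) = -a by ring]
    _ = gaussianReal 0 1 (Set.Iic (-a)) := by
        refine le_antisymm (measure_mono Set.Iio_subset_Iic_self) ?_
        rw [← Set.Iio_union_right]
        exact le_trans (measure_union_le _ _) (by simp [h0])

lemma stdNormalCDF_nonneg (x : ℝ) : 0 ≤ stdNormalCDF x := ENNReal.toReal_nonneg

lemma stdNormalCDF_le_one (x : ℝ) : (stdNormalCDF x) ≤ 1 := by
  rw [stdNormalCDF, ← ENNReal.toReal_one]
  exact ENNReal.toReal_mono ENNReal.one_ne_top prob_le_one

lemma stdNormalCDF_neg (t : ℝ) : stdNormalCDF (-t) = 1 - stdNormalCDF t := by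
  have hc : gaussianReal 0 1 (Set.Ioi t) = 1 - gaussianReal 0 1 (Set.Iic t) := by
    rw [← Set.compl_Iic, measure_compl measurableSet_Iic (measure_ne_top _ _), measure_univ]
  rw [stdNormalCDF, ← std_Ioi, hc,
    ENNReal.toReal_sub_of_le prob_le_one ENNReal.one_ne_top, ENNReal.toReal_one, stdNormalCDF]

lemma stdNormalCDF_monotone : Monotone stdNormalCDF := fun a b hab =>
  ENNReal.toReal_mono (measure_ne_top _ _) (measure_mono (Set.Iic_subset_Iic.mpr hab))

lemma gauss_Ioi (m : ℝ) {s2 : ℝ} (hs2 : 0 < s2) :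
    gaussianReal m (NNReal.mk s2 hs2.le) (Set.Ioi 0)
      = ENNReal.ofReal (stdNormalCDF ((Real.sqrt s2)⁻¹ * m)) := by
  set V : ℝ≥0 := NNReal.mk s2 hs2.le with hV
  have hVne : V ≠ 0 := fun h => hs2.ne' (by simpa [hV] using congrArg NNReal.toReal h)
  have hs : (0:ℝ) < Real.sqrt s2 := Real.sqrt_pos.mpr hs2
  have h2 : gaussianReal m V = (gaussianReal 0 V).map (· + m) := by
    rw [gaussianReal_map_add_const, zero_add]
  have h3 : gaussianReal 0 V = (gaussianReal 0 1).map (Real.sqrt s2 * ·) := by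
    rw [gaussianReal_map_const_mul, mul_zero]
    congr 1
    ext
    simp [Real.sq_sqrt hs2.le, hV]
  rw [h2, Measure.map_apply (measurable_add_const m) measurableSet_Ioi,
    Set.preimage_add_const_Ioi, zero_sub, h3,
    Measure.map_apply (measurable_const_mul _) measurableSet_Ioi,
    Set.preimage_const_mul_Ioi₀ _ hs, std_Ioi, neg_div, neg_neg, stdNormalCDF, div_eq_inv_mul,
    ENNReal.ofReal_toReal (measure_ne_top _ _)]


lemma measurable_dot (w : Fin d → ℝ) : Measurable fun u : Fin d → ℝ => w ⬝ᵥ u := by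
  simp only [dotProduct]
  exact Finset.measurable_sum _ fun i _ => (measurable_pi_apply i).const_mul _

lemma measurable_quad {n : Type*} [Fintype n] [DecidableEq n] (M : Matrix n n ℝ) :
    Measurable fun z : n → ℝ => z ⬝ᵥ M *ᵥ z := by
  simp only [dotProduct, Matrix.mulVec]
  exact Finset.measurable_sum _ fun i _ => (measurable_pi_apply i).mul
    (Finset.measurable_sum _ fun j _ => (measurable_pi_apply j).const_mul _)

lemma measurable_mvNormalPDF {n : Type*} [Fintype n] [DecidableEq n] (S : Matrix n n ℝ) :
    Measurable (mvNormalPDF S) := by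
  unfold mvNormalPDF
  exact ((((measurable_quad S⁻¹).neg).div_const 2).exp).const_mul _

lemma mvNormalPDF_neg {n : Type*} [Fintype n] [DecidableEq n] (S : Matrix n n ℝ) (z : n → ℝ) :
    mvNormalPDF S (-z) = mvNormalPDF S z := by
  unfold mvNormalPDF
  rw [Matrix.mulVec_neg, dotProduct_neg, neg_dotProduct, neg_neg]

lemma measurable_vcat : Measurable fun p : ℝ × (Fin d → ℝ) => vcat p.1 p.2 := by
  refine measurable_pi_lambda _ fun i => ?_
  cases i with
  | inl j => exact measurable_fst
  | inr j => exact (measurable_pi_apply j).comp measurable_snd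

end Stmt11

open Stmt11 NNReal ENNReal in
/-- if (U₀, U) is N_{d+1}(0, Ω*) with Ω* the correlation matrix with
blocks 1, δᵀ; δ, Ω̄, then the conditional distribution of U given U₀ > 0 has density
2 φ_d(u; Ω̄) Φ(αᵀu) with α = Ω̄⁻¹δ/√(1 - δᵀΩ̄⁻¹δ). -/
theorem stmt_11 {Ω : Type*} [MeasureSpace Ω] [IsProbabilityMeasure (ℙ : Measure Ω)]
    {d : ℕ} (Ωb : Matrix (Fin d) (Fin d) ℝ) (hΩ : Ωb.PosDef) (hcorr : ∀ i, Ωb i i = 1)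
    (δ : Fin d → ℝ) (hδ : δ ⬝ᵥ Ωb⁻¹.mulVec δ < 1)
    (hfull : (corrBlock δ Ωb).PosDef)
    (U₀ : Ω → ℝ) (U : Ω → (Fin d → ℝ)) (hU₀ : Measurable U₀) (hU : Measurable U)
    (hjoint : Measure.map (fun ω => (U₀ ω, U ω)) ℙ
      = (volume : Measure (ℝ × (Fin d → ℝ))).withDensity (fun p =>
          ENNReal.ofReal (mvNormalPDF (corrBlock δ Ωb) (vcat p.1 p.2)))) :
    Measure.map U (ℙ[|{ω | 0 < U₀ ω}])
      = volume.withDensity (fun u => ENNReal.ofReal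
          (2 * mvNormalPDF Ωb u *
            stdNormalCDF (((Real.sqrt (1 - δ ⬝ᵥ Ωb⁻¹.mulVec δ))⁻¹ • Ωb⁻¹.mulVec δ) ⬝ᵥ u))) := by
  classical
  have hs2 : (0:ℝ) < 1 - δ ⬝ᵥ Ωb⁻¹ *ᵥ δ := by linarith
  set v : Fin d → ℝ := Ωb⁻¹ *ᵥ δ with hv
  set s2 : ℝ := 1 - δ ⬝ᵥ v with hs2def
  set V : ℝ≥0 := NNReal.mk s2 hs2.le with hV
  have hVne : V ≠ 0 := fun h => hs2.ne' (by simpa [hV] using congrArg NNReal.toReal h)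
  have hφ0 : ∀ u : Fin d → ℝ, 0 ≤ mvNormalPDF Ωb u := mvNormalPDF_nonneg hΩ.det_pos.le
  have hpair : Measurable fun ω => (U₀ ω, U ω) := hU₀.prodMk hU
  set f : ℝ × (Fin d → ℝ) → ℝ≥0∞ := fun p =>
    ENNReal.ofReal (mvNormalPDF (corrBlock δ Ωb) (vcat p.1 p.2)) with hfd
  set g : (Fin d → ℝ) → ℝ≥0∞ := fun u =>
    ENNReal.ofReal (mvNormalPDF Ωb u * stdNormalCDF ((Real.sqrt s2)⁻¹ * (v ⬝ᵥ u))) with hgd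
  have hg_meas : Measurable g := by
    rw [hgd]
    exact ((measurable_mvNormalPDF Ωb).mul
      (stdNormalCDF_monotone.measurable.comp ((measurable_dot v).const_mul _))).ennreal_ofReal
  have hfac_meas : Measurable fun p : ℝ × (Fin d → ℝ) =>
      ENNReal.ofReal (mvNormalPDF Ωb p.2 * gaussianPDFReal (v ⬝ᵥ p.2) V p.1) := by
    refine Measurable.ennreal_ofReal ?_
    refine ((measurable_mvNormalPDF Ωb).comp measurable_snd).mul ?_
    unfold gaussianPDFReal
    exact ((((measurable_fst.sub ((measurable_dot v).comp
      measurable_snd)).pow_const 2).neg.div_const _).exp).const_mul _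
  have hslice : ∀ (s : Set ℝ), MeasurableSet s → ∀ (B : Set (Fin d → ℝ)), MeasurableSet B →
      (volume.withDensity f) (s ×ˢ B)
        = ∫⁻ u in B, ENNReal.ofReal (mvNormalPDF Ωb u) * gaussianReal (v ⬝ᵥ u) V s := by
    intro s hs B hB
    rw [withDensity_apply _ (hs.prod hB)]
    calc ∫⁻ p in s ×ˢ B, f p
        = ∫⁻ p in s ×ˢ B, ENNReal.ofReal
            (mvNormalPDF Ωb p.2 * gaussianPDFReal (v ⬝ᵥ p.2) V p.1) :=
          lintegral_congr fun p => congrArg ENNReal.ofReal (factor hΩ hδ p.1 p.2)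
      _ = ∫⁻ u in B, ∫⁻ x in s, ENNReal.ofReal
            (mvNormalPDF Ωb u * gaussianPDFReal (v ⬝ᵥ u) V x) := by
          rw [Measure.volume_eq_prod, ← Measure.prod_restrict]
          exact lintegral_prod_symm _ hfac_meas.aemeasurable
      _ = ∫⁻ u in B, ENNReal.ofReal (mvNormalPDF Ωb u) * gaussianReal (v ⬝ᵥ u) V s := by
          refine lintegral_congr fun u => ?_
          calc ∫⁻ x in s, ENNReal.ofReal (mvNormalPDF Ωb u * gaussianPDFReal (v ⬝ᵥ u) V x)
              = ∫⁻ x in s, ENNReal.ofReal (mvNormalPDF Ωb u)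
                  * ENNReal.ofReal (gaussianPDFReal (v ⬝ᵥ u) V x) :=
                lintegral_congr fun x => ENNReal.ofReal_mul (hφ0 u)
            _ = ENNReal.ofReal (mvNormalPDF Ωb u)
                  * ∫⁻ x in s, ENNReal.ofReal (gaussianPDFReal (v ⬝ᵥ u) V x) :=
                lintegral_const_mul' _ _ ENNReal.ofReal_ne_top
            _ = ENNReal.ofReal (mvNormalPDF Ωb u) * gaussianReal (v ⬝ᵥ u) V s := by
                rw [gaussianReal_of_var_ne_zero _ hVne, withDensity_apply _ hs]
                rfl
  have hIoi : ∀ (B : Set (Fin d → ℝ)), MeasurableSet B →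
      (volume.withDensity f) (Set.Ioi 0 ×ˢ B) = ∫⁻ u in B, g u := by
    intro B hB
    rw [hslice _ measurableSet_Ioi B hB]
    refine lintegral_congr fun u => ?_
    rw [hV, gauss_Ioi (v ⬝ᵥ u) hs2, ← ENNReal.ofReal_mul (hφ0 u), hgd]
  have huniv : (volume.withDensity f) Set.univ = 1 := by
    rw [← hjoint, Measure.map_apply hpair MeasurableSet.univ]
    simp
  have hnorm : ∫⁻ u, ENNReal.ofReal (mvNormalPDF Ωb u) = 1 := by
    have h := hslice Set.univ MeasurableSet.univ Set.univ MeasurableSet.univ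
    rw [Set.univ_prod_univ, huniv] at h
    simpa [measure_univ] using h.symm
  have hhalf : ∫⁻ u, g u = 1/2 := by
    have hkey : ∀ u, g u + g (-u) = ENNReal.ofReal (mvNormalPDF Ωb u) := by
      intro u
      have hle := stdNormalCDF_le_one ((Real.sqrt s2)⁻¹ * (v ⬝ᵥ u))
      have hge := stdNormalCDF_nonneg ((Real.sqrt s2)⁻¹ * (v ⬝ᵥ u))
      rw [hgd]
      simp only
      rw [mvNormalPDF_neg, dotProduct_neg, mul_neg, stdNormalCDF_neg,
        ← ENNReal.ofReal_add (mul_nonneg (hφ0 u) hge) (mul_nonneg (hφ0 u) (by linarith))]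
      congr 1
      ring
    have hneg : ∫⁻ u, g (-u) = ∫⁻ u, g u :=
      (Measure.measurePreserving_neg (volume : Measure (Fin d → ℝ))).lintegral_comp hg_meas
    have hsum : (∫⁻ u, g u) + (∫⁻ u, g u) = 1 := by
      nth_rewrite 2 [← hneg]
      rw [← lintegral_add_left hg_meas]
      rw [lintegral_congr hkey]
      exact hnorm
    have h2 : (2:ℝ≥0∞) * ∫⁻ u, g u = 1 := by rw [two_mul]; exact hsum
    exact (ENNReal.eq_div_iff two_ne_zero ENNReal.ofNat_ne_top).mpr h2
  have hPA : ℙ {ω | 0 < U₀ ω} = 1/2 := by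
    have hpre : {ω | 0 < U₀ ω} = (fun ω => (U₀ ω, U ω)) ⁻¹' (Set.Ioi 0 ×ˢ Set.univ) := by
      ext ω; simp
    rw [hpre, ← Measure.map_apply hpair (measurableSet_Ioi.prod MeasurableSet.univ), hjoint,
      hIoi Set.univ MeasurableSet.univ, Measure.restrict_univ, hhalf]
  ext B hB
  rw [ProbabilityTheory.cond, Measure.map_smul, Measure.smul_apply, smul_eq_mul,
    Measure.map_apply hU hB, Measure.restrict_apply (hU hB), hPA,
    withDensity_apply _ hB]
  have hpre2 : U ⁻¹' B ∩ {ω | 0 < U₀ ω} = (fun ω => (U₀ ω, U ω)) ⁻¹' (Set.Ioi 0 ×ˢ B) := by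
    ext ω; simp [and_comm]
  rw [hpre2, ← Measure.map_apply hpair (measurableSet_Ioi.prod hB), hjoint, hIoi B hB]
  have hgoalfun : ∀ u, ENNReal.ofReal (2 * mvNormalPDF Ωb u
      * stdNormalCDF (((Real.sqrt s2)⁻¹ • v) ⬝ᵥ u)) = 2 * g u := by
    intro u
    rw [smul_dotProduct, smul_eq_mul, mul_assoc,
      ENNReal.ofReal_mul (by norm_num : (0:ℝ) ≤ 2), hgd]
    norm_num
  rw [lintegral_congr hgoalfun, lintegral_const_mul' _ _ ENNReal.ofNat_ne_top]
  congr 1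
  rw [one_div, inv_inv]
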